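/- arXiv:1701.00808 — 3 statements merged into one kernel-verified Lean document; each statement's English description precedes it below -/
import Mathlib

section
/- Let n ≥ 2 and let L be a generalized Legendre polynomial of degree n−1. Define φ(ξ) = ∫_{−1}^{ξ} w(t) L(t) dt for ξ ∈ [−1,1]. Then φ is continuous on [−1,1] with φ(−1) = φ(1) = 0; the restrictions of φ to [−1,α̂] and to [α̂,1] are infinitely differentiable with β̂ φ⁽ʲ⁾ = L⁽ʲ⁻¹⁾ on each of (−1,α̂) and (α̂,1) for every j ≥ 1; and consequently the jump conditions β⁻ φ⁽ʲ⁾(α̂⁻) = β⁺ φ⁽ʲ⁾(α̂⁺) hold for every j = 1, …, n. -/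
/-!
Splitting the integral at `α̂` gives `φ ξ = φ α̂ + β±⁻¹ ∫_{α̂}^{ξ} L` on either side of `α̂`,
so on each closed sub-interval `φ` agrees with a smooth function `C + β±⁻¹ P`, where `P` is a
primitive of `L`; its derivatives of order `j ≥ 1` are `β±⁻¹ L⁽ʲ⁻¹⁾`, and both one-sided
values `β± φ⁽ʲ⁾(α̂±)` equal `L⁽ʲ⁻¹⁾(α̂)`. Orthogonality of `L` to the constant `1` gives `φ 1 = 0`.
-/

open Set

/-- The piecewise-constant diffusion coefficient on the reference interval. -/
noncomputable def betah (βm βp αh : ℝ) : ℝ → ℝ := fun ξ => if ξ < αh then βm else βp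

open MeasureTheory Filter Topology Polynomial
open scoped Interval

namespace Polynomial

theorem iteratedDeriv_eval (p : ℝ[X]) (k : ℕ) :
    iteratedDeriv k (fun x => p.eval x) = fun x => (derivative^[k] p).eval x := by
  induction k generalizing p with
  | zero => simp
  | succ k ih =>
    have hderiv : deriv (fun x => p.eval x) = fun x => p.derivative.eval x := by
      ext x
      exact p.deriv
    rw [iteratedDeriv_succ', hderiv, ih, Function.iterate_succ_apply]

theorem deriv_integral_eval (p : ℝ[X]) (a : ℝ) :
    deriv (fun x => ∫ t in a..x, p.eval t) = fun x => p.eval x := by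
  ext x
  exact p.continuous.deriv_integral _ a x

theorem contDiff_integral_eval (p : ℝ[X]) (a : ℝ) :
    ContDiff ℝ (⊤ : ℕ∞) fun x => ∫ t in a..x, p.eval t := by
  rw [contDiff_infty_iff_deriv, deriv_integral_eval]
  exact ⟨fun x => (p.continuous.integral_hasStrictDerivAt a x).hasDerivAt.differentiableAt,
    by simpa using p.contDiff_aeval (𝕜 := ℝ) _⟩

theorem iteratedDeriv_succ_integral_eval (p : ℝ[X]) (a : ℝ) (k : ℕ) :
    iteratedDeriv (k + 1) (fun x => ∫ t in a..x, p.eval t)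
      = fun x => (derivative^[k] p).eval x := by
  rw [iteratedDeriv_succ', deriv_integral_eval, iteratedDeriv_eval]

end Polynomial

section PrimitivePiece

variable {φ : ℝ → ℝ} {s : Set ℝ} {p : ℝ[X]} {C a β x : ℝ}

theorem contDiff_const_add_integral_div :
    ContDiff ℝ (⊤ : ℕ∞) fun ξ => C + (∫ t in a..ξ, p.eval t) / β :=
  contDiff_const.add ((p.contDiff_integral_eval a).div_const β)

theorem ContDiffOn.of_eqOn_const_add_integral_div
    (h : EqOn φ (fun ξ => C + (∫ t in a..ξ, p.eval t) / β) s) :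
    ContDiffOn ℝ (⊤ : ℕ∞) φ s :=
  contDiff_const_add_integral_div.contDiffOn.congr h

theorem mul_iteratedDeriv_succ_const_add_integral_div (hβ : β ≠ 0) (k : ℕ) :
    β * iteratedDeriv (k + 1) (fun ξ => C + (∫ t in a..ξ, p.eval t) / β) x
      = (derivative^[k] p).eval x := by
  rw [iteratedDeriv_const_add k.succ_pos, iteratedDeriv_div_const,
    p.iteratedDeriv_succ_integral_eval, mul_div_cancel₀ _ hβ]

theorem mul_iteratedDeriv_succ_of_eqOn_const_add_integral_div (hβ : β ≠ 0)
    (h : EqOn φ (fun ξ => C + (∫ t in a..ξ, p.eval t) / β) s) (hs : s ∈ 𝓝 x) (k : ℕ) :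
    β * iteratedDeriv (k + 1) φ x = (derivative^[k] p).eval x := by
  rw [(h.eventuallyEq_of_mem hs).iteratedDeriv_eq,
    mul_iteratedDeriv_succ_const_add_integral_div hβ]

theorem mul_iteratedDerivWithin_succ_of_eqOn_const_add_integral_div (hβ : β ≠ 0)
    (h : EqOn φ (fun ξ => C + (∫ t in a..ξ, p.eval t) / β) s) (hs : UniqueDiffOn ℝ s)
    (hx : x ∈ s) (k : ℕ) :
    β * iteratedDerivWithin (k + 1) φ s x = (derivative^[k] p).eval x := by
  rw [iteratedDerivWithin_congr h hx, iteratedDerivWithin_eq_iteratedDeriv hs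
    (contDiff_const_add_integral_div.contDiffAt.of_le (by exact_mod_cast le_top)) hx,
    mul_iteratedDeriv_succ_const_add_integral_div hβ]

end PrimitivePiece

theorem intervalIntegral.integral_div_of_ae_eq_const {f g : ℝ → ℝ} {a b c : ℝ}
    (hg : ∀ᵐ t ∂volume.restrict (Ι a b), g t = c) :
    ∫ t in a..b, f t / g t = (∫ t in a..b, f t) / c := by
  rw [← intervalIntegral.integral_div]
  exact intervalIntegral.integral_congr_ae_restrict (hg.mono fun t ht => by simp only [ht])

theorem IntervalIntegrable.div_of_ae_eq_const {f g : ℝ → ℝ} {a b c : ℝ}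
    (hf : IntervalIntegrable f volume a b) (hg : ∀ᵐ t ∂volume.restrict (Ι a b), g t = c) :
    IntervalIntegrable (fun t => f t / g t) volume a b :=
  (hf.div_const c).congr_ae (hg.mono fun t ht => by simp only [ht])

section Betah

variable {βm βp αh ξ : ℝ}

theorem betah_ae_eq_of_le (hξ : ξ ≤ αh) :
    ∀ᵐ t ∂volume.restrict (Ι αh ξ), betah βm βp αh t = βm := by
  have hne : ∀ᵐ t ∂volume.restrict (Ι αh ξ), t ≠ αh :=
    ae_restrict_of_ae (volume.ae_ne αh)
  filter_upwards [hne, ae_restrict_mem measurableSet_uIoc] with t htα ht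
  have : t ≤ αh := ht.2.trans (max_le le_rfl hξ)
  simp [betah, lt_of_le_of_ne this htα]

theorem betah_ae_eq_of_ge (hξ : αh ≤ ξ) :
    ∀ᵐ t ∂volume.restrict (Ι αh ξ), betah βm βp αh t = βp := by
  filter_upwards [ae_restrict_mem measurableSet_uIoc] with t ht
  have : αh < t := (le_min le_rfl hξ).trans_lt ht.1
  simp [betah, this.not_gt]

theorem integral_div_betah_eq_add {f : ℝ → ℝ} {a β : ℝ} (hf : Continuous f) (ha : a ≤ αh)
    (hβ : ∀ᵐ t ∂volume.restrict (Ι αh ξ), betah βm βp αh t = β) :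
    ∫ t in a..ξ, f t / betah βm βp αh t
      = (∫ t in a..αh, f t / betah βm βp αh t) + (∫ t in αh..ξ, f t) / β := by
  have hleft : IntervalIntegrable (fun t => f t / betah βm βp αh t) volume a αh :=
    (hf.intervalIntegrable a αh).div_of_ae_eq_const
      (uIoc_comm a αh ▸ betah_ae_eq_of_le ha)
  rw [← intervalIntegral.integral_add_adjacent_intervals hleft
    ((hf.intervalIntegrable αh ξ).div_of_ae_eq_const hβ),
    intervalIntegral.integral_div_of_ae_eq_const hβ]

end Betah

theorem stmt_2_general (n : ℕ) (hn : 2 ≤ n) (βm βp αh : ℝ) (hβm : 0 < βm) (hβp : 0 < βp)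
    (hα₁ : -1 < αh) (hα₂ : αh < 1)
    (L : Polynomial ℝ)
    (hLorth : ∀ q : Polynomial ℝ, q.degree < ((n - 1 : ℕ) : WithBot ℕ) →
      ∫ ξ in (-1 : ℝ)..1, L.eval ξ * q.eval ξ / betah βm βp αh ξ = 0)
    (φ : ℝ → ℝ) (hφ : ∀ ξ, φ ξ = ∫ t in (-1 : ℝ)..ξ, L.eval t / betah βm βp αh t) :
    ContinuousOn φ (Icc (-1) 1) ∧ φ (-1) = 0 ∧ φ 1 = 0 ∧
    ContDiffOn ℝ (⊤ : ℕ∞) φ (Icc (-1) αh) ∧ ContDiffOn ℝ (⊤ : ℕ∞) φ (Icc αh 1) ∧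
    (∀ j : ℕ, 1 ≤ j →
      (∀ ξ ∈ Ioo (-1 : ℝ) αh,
        βm * iteratedDeriv j φ ξ = ((⇑Polynomial.derivative)^[j - 1] L).eval ξ) ∧
      (∀ ξ ∈ Ioo αh (1 : ℝ),
        βp * iteratedDeriv j φ ξ = ((⇑Polynomial.derivative)^[j - 1] L).eval ξ)) ∧
    (∀ j : ℕ, 1 ≤ j → j ≤ n →
      βm * iteratedDerivWithin j φ (Icc (-1) αh) αh
        = βp * iteratedDerivWithin j φ (Icc αh 1) αh) := by
  obtain rfl : φ = _ := funext hφ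
  have hleft : EqOn _ _ (Icc (-1) αh) := fun ξ hξ =>
    integral_div_betah_eq_add (βm := βm) (βp := βp) L.continuous hα₁.le
      (betah_ae_eq_of_le hξ.2)
  have hright : EqOn _ _ (Icc αh 1) := fun ξ hξ =>
    integral_div_betah_eq_add (βm := βm) (βp := βp) L.continuous hα₁.le
      (betah_ae_eq_of_ge hξ.1)
  have hsmoothLeft := ContDiffOn.of_eqOn_const_add_integral_div hleft
  have hsmoothRight := ContDiffOn.of_eqOn_const_add_integral_div hright
  have horth : (1 : ℝ[X]).degree < ((n - 1 : ℕ) : WithBot ℕ) := by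
    rw [degree_one]
    exact_mod_cast (by omega : 0 < n - 1)
  refine ⟨?_, intervalIntegral.integral_same, by simpa using hLorth 1 horth,
    hsmoothLeft, hsmoothRight, ?_, ?_⟩
  · rw [← Icc_union_Icc_eq_Icc hα₁.le hα₂.le]
    exact hsmoothLeft.continuousOn.union_of_isClosed hsmoothRight.continuousOn
      isClosed_Icc isClosed_Icc
  · rintro (_ | k) hk
    · omega
    exact ⟨fun ξ hξ => mul_iteratedDeriv_succ_of_eqOn_const_add_integral_div hβm.ne' hleft
        (Icc_mem_nhds hξ.1 hξ.2) k,
      fun ξ hξ => mul_iteratedDeriv_succ_of_eqOn_const_add_integral_div hβp.ne' hright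
        (Icc_mem_nhds hξ.1 hξ.2) k⟩
  · rintro (_ | k) hk -
    · omega
    rw [mul_iteratedDerivWithin_succ_of_eqOn_const_add_integral_div hβm.ne' hleft
        (uniqueDiffOn_Icc hα₁) ⟨hα₁.le, le_rfl⟩,
      mul_iteratedDerivWithin_succ_of_eqOn_const_add_integral_div hβp.ne' hright
        (uniqueDiffOn_Icc hα₂) ⟨le_rfl, hα₂.le⟩]

/-- the generalized Lobatto polynomial
`φ(ξ) = ∫_{−1}^{ξ} w(t) L(t) dt` of degree `n ≥ 2` (where `L` is a generalized Legendre
polynomial of degree `n−1` for the weight `w = 1/β̂`) is continuous with `φ(−1) = φ(1) = 0`,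
its restrictions to the two sub-intervals are infinitely differentiable with
`β̂ φ⁽ʲ⁾ = L⁽ʲ⁻¹⁾` there, and it satisfies the jump conditions
`β⁻ φ⁽ʲ⁾(α̂⁻) = β⁺ φ⁽ʲ⁾(α̂⁺)` for `j = 1,…,n`. -/
theorem stmt_2 (n : ℕ) (hn : 2 ≤ n) (βm βp αh : ℝ) (hβm : 0 < βm) (hβp : 0 < βp)
    (hα₁ : -1 < αh) (hα₂ : αh < 1)
    (L : Polynomial ℝ) (hLdeg : L.degree = ((n - 1 : ℕ) : WithBot ℕ))
    (hLorth : ∀ q : Polynomial ℝ, q.degree < ((n - 1 : ℕ) : WithBot ℕ) →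
      ∫ ξ in (-1 : ℝ)..1, L.eval ξ * q.eval ξ / betah βm βp αh ξ = 0)
    (φ : ℝ → ℝ) (hφ : ∀ ξ, φ ξ = ∫ t in (-1 : ℝ)..ξ, L.eval t / betah βm βp αh t) :
    ContinuousOn φ (Icc (-1) 1) ∧ φ (-1) = 0 ∧ φ 1 = 0 ∧
    ContDiffOn ℝ (⊤ : ℕ∞) φ (Icc (-1) αh) ∧ ContDiffOn ℝ (⊤ : ℕ∞) φ (Icc αh 1) ∧
    (∀ j : ℕ, 1 ≤ j →
      (∀ ξ ∈ Ioo (-1 : ℝ) αh,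
        βm * iteratedDeriv j φ ξ = ((⇑Polynomial.derivative)^[j - 1] L).eval ξ) ∧
      (∀ ξ ∈ Ioo αh (1 : ℝ),
        βp * iteratedDeriv j φ ξ = ((⇑Polynomial.derivative)^[j - 1] L).eval ξ)) ∧
    (∀ j : ℕ, 1 ≤ j → j ≤ n →
      βm * iteratedDerivWithin j φ (Icc (-1) αh) αh
        = βp * iteratedDerivWithin j φ (Icc αh 1) αh) :=
  stmt_2_general n hn βm βp αh hβm hβp hα₁ hα₂ L hLorth φ hφ
end

section
/- Let p ≥ 1, β⁻, β⁺ > 0 and s < α < t, with β(x) = β⁻ for x ∈ (s,α) and β(x) = β⁺ for x ∈ (α,t). Suppose g₁, …, g_p ∈ (s,t) with every g_j ≠ α, and weights A₁, …, A_p satisfy Σ_j A_j F(g_j) = ∫_s^t F(x)/β(x) dx for every polynomial F of degree ≤ 2p−1. If v : [s,t] → ℝ is continuous and coincides with polynomials v⁻ on [s,α] and v⁺ on [α,t] of degree ≤ p satisfying β⁻ (v⁻)⁽ʲ⁾(α) = β⁺ (v⁺)⁽ʲ⁾(α) for j = 1, …, p, then Σ_{j=1}^{p} A_j (β(g_j)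 v′(g_j))² = ∫_s^t β(x) v′(x)² dx. -/
/-!
The jump conditions say that the polynomial `βm vm - βp vp`, of degree at most `p`, has vanishing
derivatives of orders `1, …, p` at `α`; hence its derivative vanishes, i.e. the flux `β v′` is
the single polynomial `W = βm vm′` of degree at most `p - 1` on both sides of the interface.
Off the interface `β v′² = W² / β`, and `W²` has degree at most `2p - 2`, so the quadrature
rule with weight `1/β` integrates it exactly.
-/

open Set

/-- The piecewise-constant diffusion coefficient with interface point `α`. -/
noncomputable def betaPW (βm βp α : ℝ) : ℝ → ℝ := fun t => if t < α then βm else βp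

namespace Polynomial

variable {K : Type*} [Field K] [CharZero K]

theorem eq_zero_of_forall_eval_iterate_derivative_eq_zero {q : K[X]} {r : K}
    (h : ∀ n, (derivative^[n] q).eval r = 0) : q = 0 := by
  rw [← taylor_eq_zero (r := r)]
  ext n
  have hn := h n
  rw [← factorial_smul_hasseDeriv, LinearMap.smul_apply, eval_smul, smul_eq_zero] at hn
  rw [taylor_coeff, coeff_zero]
  exact hn.resolve_left (Nat.factorial_ne_zero n)

theorem derivative_eq_zero_of_eval_iterate_derivative_eq_zero {q : K[X]} {r : K} {p : ℕ}
    (hdeg : q.natDegree ≤ p) (h : ∀ j, 1 ≤ j → j ≤ p → (derivative^[j] q).eval r = 0) :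
    derivative q = 0 := by
  refine eq_zero_of_forall_eval_iterate_derivative_eq_zero (r := r) fun n => ?_
  rw [← Function.iterate_succ_apply]
  by_cases hn : n + 1 ≤ p
  · exact h (n + 1) (Nat.succ_pos n) hn
  · rw [iterate_derivative_eq_zero (by omega), eval_zero]

theorem C_mul_derivative_eq_of_jump {f g : K[X]} {a b r : K} {p : ℕ}
    (hf : f.natDegree ≤ p) (hg : g.natDegree ≤ p)
    (hjump : ∀ j, 1 ≤ j → j ≤ p →
      a * (derivative^[j] f).eval r = b * (derivative^[j] g).eval r) :
    C a * derivative f = C b * derivative g := by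
  have hdeg : (C a * f - C b * g).natDegree ≤ p :=
    (natDegree_sub_le _ _).trans <|
      max_le ((natDegree_C_mul_le _ _).trans hf) ((natDegree_C_mul_le _ _).trans hg)
  have hzero := derivative_eq_zero_of_eval_iterate_derivative_eq_zero hdeg fun j hj hjp => by
    rw [iterate_derivative_sub, iterate_derivative_C_mul, iterate_derivative_C_mul, eval_sub,
      eval_mul, eval_mul, eval_C, eval_C, hjump j hj hjp, sub_self]
  rwa [derivative_sub, derivative_C_mul, derivative_C_mul, sub_eq_zero] at hzero

end Polynomial

open Polynomial

theorem deriv_eq_derivative_eval_of_eq_on_Icc {v : ℝ → ℝ} {P : ℝ[X]} {a b x : ℝ}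
    (hv : ∀ y ∈ Icc a b, v y = P.eval y) (hx : x ∈ Ioo a b) :
    deriv v x = P.derivative.eval x := by
  have hev : v =ᶠ[nhds x] fun y => P.eval y := by
    filter_upwards [Ioo_mem_nhds hx.1 hx.2] with y hy
    exact hv y (Ioo_subset_Icc_self hy)
  rw [hev.deriv_eq, Polynomial.deriv]

theorem betaPW_ne_zero {βm βp : ℝ} (hβm : 0 < βm) (hβp : 0 < βp) (α x : ℝ) :
    betaPW βm βp α x ≠ 0 := by
  unfold betaPW
  split_ifs <;> positivity

theorem betaPW_mul_deriv_eq_flux {βm βp s α t x : ℝ} {v : ℝ → ℝ} {vm vp : ℝ[X]}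
    (hflux : C βm * derivative vm = C βp * derivative vp)
    (hvm : ∀ y ∈ Icc s α, v y = vm.eval y) (hvp : ∀ y ∈ Icc α t, v y = vp.eval y)
    (hx : x ∈ Ioo s t) (hxα : x ≠ α) :
    betaPW βm βp α x * deriv v x = (C βm * derivative vm).eval x := by
  rcases hxα.lt_or_gt with h | h
  · rw [betaPW, if_pos h, deriv_eq_derivative_eval_of_eq_on_Icc hvm ⟨hx.1, h⟩, eval_mul, eval_C]
  · rw [betaPW, if_neg h.not_gt, deriv_eq_derivative_eval_of_eq_on_Icc hvp ⟨h, hx.2⟩, hflux,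
      eval_mul, eval_C]

theorem stmt_5_general (p : ℕ) (βm βp s α t : ℝ)
    (hβm : 0 < βm) (hβp : 0 < βp) (hsα : s < α) (hαt : α < t)
    (g A : ℕ → ℝ)
    (hg : ∀ j ∈ Finset.Icc 1 p, g j ∈ Ioo s t ∧ g j ≠ α)
    (hquad : ∀ F : Polynomial ℝ, F.natDegree ≤ 2 * p - 1 →
      ∑ j ∈ Finset.Icc 1 p, A j * F.eval (g j)
        = ∫ x in s..t, F.eval x / betaPW βm βp α x)
    (v : ℝ → ℝ)
    (vm vp : Polynomial ℝ) (hdm : vm.natDegree ≤ p) (hdp : vp.natDegree ≤ p)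
    (hvm : ∀ y ∈ Icc s α, v y = vm.eval y)
    (hvp : ∀ y ∈ Icc α t, v y = vp.eval y)
    (hjump : ∀ j, 1 ≤ j → j ≤ p →
      βm * ((⇑Polynomial.derivative)^[j] vm).eval α
        = βp * ((⇑Polynomial.derivative)^[j] vp).eval α) :
    ∑ j ∈ Finset.Icc 1 p, A j * (betaPW βm βp α (g j) * deriv v (g j)) ^ 2
      = ∫ x in s..t, betaPW βm βp α x * (deriv v x) ^ 2 := by
  set W : ℝ[X] := C βm * derivative vm
  have hW : ∀ x ∈ Ioo s t, x ≠ α → betaPW βm βp α x * deriv v x = W.eval x :=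
    fun x hx hxα => betaPW_mul_deriv_eq_flux (C_mul_derivative_eq_of_jump hdm hdp hjump)
      hvm hvp hx hxα
  have hdeg : (W * W).natDegree ≤ 2 * p - 1 := by
    have hWdeg : W.natDegree ≤ p - 1 :=
      (natDegree_C_mul_le _ _).trans ((natDegree_derivative_le _).trans (by omega))
    have := natDegree_mul_le (p := W) (q := W)
    omega
  clear_value W
  calc ∑ j ∈ Finset.Icc 1 p, A j * (betaPW βm βp α (g j) * deriv v (g j)) ^ 2
      = ∑ j ∈ Finset.Icc 1 p, A j * (W * W).eval (g j) :=
        Finset.sum_congr rfl fun j hj => by rw [hW _ (hg j hj).1 (hg j hj).2, eval_mul, sq]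
    _ = ∫ x in s..t, (W * W).eval x / betaPW βm βp α x := hquad _ hdeg
    _ = ∫ x in s..t, betaPW βm βp α x * (deriv v x) ^ 2 := by
        refine intervalIntegral.integral_congr_ae ?_
        filter_upwards [MeasureTheory.volume.ae_ne α, MeasureTheory.volume.ae_ne t]
          with x hxα hxt hx
        rw [uIoc_of_le (hsα.trans hαt).le] at hx
        rw [eval_mul, ← hW x ⟨hx.1, hx.2.lt_of_ne hxt⟩ hxα]
        field_simp [betaPW_ne_zero hβm hβp α x]

/-- the exactness identity (3.2): if the weighted Gauss quadrature with weight
`1/β` is exact for polynomials of degree ≤ 2p−1 and `v` is an immersed finite element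
function on the interface element (piecewise polynomial of degree ≤ p satisfying the
derivative jump conditions), then
`Σ_j A_j (β(g_j) v′(g_j))² = ∫_s^t β(x) v′(x)² dx`. -/
theorem stmt_5 (p : ℕ) (hp : 1 ≤ p) (βm βp s α t : ℝ)
    (hβm : 0 < βm) (hβp : 0 < βp) (hsα : s < α) (hαt : α < t)
    (g A : ℕ → ℝ)
    (hg : ∀ j ∈ Finset.Icc 1 p, g j ∈ Ioo s t ∧ g j ≠ α)
    (hquad : ∀ F : Polynomial ℝ, F.natDegree ≤ 2 * p - 1 →
      ∑ j ∈ Finset.Icc 1 p, A j * F.eval (g j)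
        = ∫ x in s..t, F.eval x / betaPW βm βp α x)
    (v : ℝ → ℝ) (hvc : ContinuousOn v (Icc s t))
    (vm vp : Polynomial ℝ) (hdm : vm.natDegree ≤ p) (hdp : vp.natDegree ≤ p)
    (hvm : ∀ y ∈ Icc s α, v y = vm.eval y)
    (hvp : ∀ y ∈ Icc α t, v y = vp.eval y)
    (hjump : ∀ j, 1 ≤ j → j ≤ p →
      βm * ((⇑Polynomial.derivative)^[j] vm).eval α
        = βp * ((⇑Polynomial.derivative)^[j] vp).eval α) :
    ∑ j ∈ Finset.Icc 1 p, A j * (betaPW βm βp α (g j) * deriv v (g j)) ^ 2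
      = ∫ x in s..t, betaPW βm βp α x * (deriv v x) ^ 2 :=
  stmt_5_general p βm βp s α t hβm hβp hsα hαt g A hg hquad v vm vp hdm hdp hvm hvp hjump
end

section
/- For every v in the immersed trial space U_T, |v|²_G := Σ_{i=1}^{N} Σ_{j=1}^{p} A_{i,j} (β(g_{i,j}) v′(g_{i,j}))² = ∫_a^b β(x) v′(x)² dx. Consequently ‖v‖₁ ≤ ‖v‖_G ≤ (1 + max(β⁻,β⁺))^{1/2} ‖v‖₁, where ‖v‖²₁ = ∫_a^b (v′(x)² + v(x)²) dx and ‖v‖²_G = |v|²_G + ‖v‖²₁; i.e. the norms ‖·‖₁ and ‖·‖_G are equivalent on U_T. -/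
open Set

/-- Membership in the immersed trial space `U_T`: continuous on `[a,b]`, zero boundary
values, a polynomial of degree ≤ p on each non-interface element `[x_{i-1}, x_i]` (i ≠ k),
and on the interface element `[x_{k-1}, x_k]` a continuous piecewise polynomial of degree ≤ p
satisfying the derivative jump conditions at the interface `α`. -/
def MemUT (p N k : ℕ) (a b α βm βp : ℝ) (x : ℕ → ℝ) (v : ℝ → ℝ) : Prop :=
  ContinuousOn v (Set.Icc a b) ∧ v a = 0 ∧ v b = 0 ∧
  (∀ i, 1 ≤ i → i ≤ N → i ≠ k → ∃ q : Polynomial ℝ, q.natDegree ≤ p ∧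
    ∀ y ∈ Set.Icc (x (i - 1)) (x i), v y = q.eval y) ∧
  ∃ qm qp : Polynomial ℝ, qm.natDegree ≤ p ∧ qp.natDegree ≤ p ∧
    (∀ y ∈ Set.Icc (x (k - 1)) α, v y = qm.eval y) ∧
    (∀ y ∈ Set.Icc α (x k), v y = qp.eval y) ∧
    ∀ j, 1 ≤ j → j ≤ p →
      βm * ((⇑Polynomial.derivative)^[j] qm).eval α
        = βp * ((⇑Polynomial.derivative)^[j] qp).eval α

/-- The squared discrete flux seminorm `|u|²_G = Σᵢ Σⱼ A_{i,j} (β(g_{i,j}) u′(g_{i,j}))²`. -/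
noncomputable def gseminormSq (N p : ℕ) (βm βp α : ℝ) (g A : ℕ → ℕ → ℝ) (u : ℝ → ℝ) : ℝ :=
  ∑ i ∈ Finset.Icc 1 N, ∑ j ∈ Finset.Icc 1 p,
    A i j * (betaPW βm βp α (g i j) * deriv u (g i j)) ^ 2

/-- The discrete energy norm `‖u‖_G`, where `‖u‖²_G = |u|²_G + ‖u‖²₁`. -/
noncomputable def gnorm (N p : ℕ) (a b βm βp α : ℝ) (g A : ℕ → ℕ → ℝ) (u : ℝ → ℝ) : ℝ :=
  Real.sqrt (gseminormSq N p βm βp α g A u + ∫ t in a..b, ((deriv u t) ^ 2 + (u t) ^ 2))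

/-!
On every element the flux `β v′` agrees, away from `α`, with a single polynomial `q` of degree
`≤ p - 1`: off the interface element because `β` is constant there, and on the interface element
because the jump conditions say exactly that `β⁻ (v⁻)′` and `β⁺ (v⁺)′` have the same Taylor
coefficients at `α`. Hence `(β v′)(g_{i,j})² = q(g_{i,j})²`, and `q²` has degree `≤ 2p - 2`, so the
weighted Gauss rule integrates it exactly: `Σⱼ A_{i,j} q(g_{i,j})² = ∫_{τᵢ} q²/β = ∫_{τᵢ} β (v′)²`.
Summing over the elements gives `|v|²_G = ∫ β (v′)²`, which lies between `0` and
`max(β⁻,β⁺) ‖v‖₁²`; the norm equivalence follows.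
-/

namespace Polynomial

variable {R : Type*} [CommRing R]

theorem natDegree_C_mul_derivative_le {q : R[X]} {p : ℕ} (c : R) (hq : q.natDegree ≤ p) :
    (C c * derivative q).natDegree ≤ p - 1 :=
  (natDegree_C_mul_le _ _).trans <| (natDegree_derivative_le _).trans (Nat.sub_le_sub_right hq 1)

variable [IsAddTorsionFree R]

theorem eq_zero_of_iterate_derivative_eval_eq_zero {r : R[X]} {c : R}
    (h : ∀ m, (derivative^[m] r).eval c = 0) : r = 0 := by
  rw [← taylor_eq_zero (r := c)]
  ext m
  rw [taylor_coeff, coeff_zero]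
  have := congrArg (eval c) (congrFun (factorial_smul_hasseDeriv (R := R) (k := m)) r)
  rw [h m, LinearMap.smul_apply, eval_smul] at this
  exact (smul_eq_zero.mp this).resolve_left (Nat.factorial_ne_zero m)

theorem C_mul_derivative_eq_of_jump_s6 {qm qp : R[X]} {βm βp α : R} {p : ℕ}
    (hqm : qm.natDegree ≤ p) (hqp : qp.natDegree ≤ p)
    (hjump : ∀ j, 1 ≤ j → j ≤ p →
      βm * (derivative^[j] qm).eval α = βp * (derivative^[j] qp).eval α) :
    C βm * derivative qm = C βp * derivative qp := by
  rw [← sub_eq_zero]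
  refine eq_zero_of_iterate_derivative_eval_eq_zero (c := α) fun m => ?_
  rw [iterate_derivative_sub, iterate_derivative_C_mul, iterate_derivative_C_mul,
    ← Function.iterate_succ_apply, ← Function.iterate_succ_apply, eval_sub, eval_mul,
    eval_mul, eval_C, eval_C, sub_eq_zero]
  by_cases hm : m + 1 ≤ p
  · exact hjump (m + 1) m.succ_pos hm
  · simp [iterate_derivative_eq_zero (show qm.natDegree < m + 1 by omega),
      iterate_derivative_eq_zero (show qp.natDegree < m + 1 by omega)]

end Polynomial

theorem deriv_eq_derivative_eval_of_eqOn {v : ℝ → ℝ} {q : Polynomial ℝ} {u w t : ℝ}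
    (hv : EqOn v q.eval (Icc u w)) (ht : t ∈ Ioo u w) :
    deriv v t = q.derivative.eval t := by
  rw [(hv.mono Ioo_subset_Icc_self).eventuallyEq_of_mem (Ioo_mem_nhds ht.1 ht.2) |>.deriv_eq,
    Polynomial.deriv]

theorem Finset.sum_Icc_one_sub_one {M : Type*} [AddCommMonoid M] (f : ℕ → ℕ → M) (N : ℕ) :
    ∑ i ∈ Finset.Icc 1 N, f (i - 1) i = ∑ m ∈ Finset.range N, f m (m + 1) := by
  rw [← Finset.Ico_add_one_right_eq_Icc, Finset.sum_Ico_eq_sum_range]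
  simp [Nat.add_comm]

open MeasureTheory Interval

section Adjacent

variable {f : ℝ → ℝ} {x : ℕ → ℝ} {N : ℕ}

theorem intervalIntegrable_of_forall_Icc
    (hf : ∀ i ∈ Finset.Icc 1 N, IntervalIntegrable f volume (x (i - 1)) (x i)) :
    IntervalIntegrable f volume (x 0) (x N) :=
  IntervalIntegrable.trans_iterate fun m hm => by
    simpa using hf (m + 1) (Finset.mem_Icc.2 ⟨m.succ_pos, hm⟩)

theorem sum_Icc_integral_eq_integral
    (hf : ∀ i ∈ Finset.Icc 1 N, IntervalIntegrable f volume (x (i - 1)) (x i)) :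
    ∑ i ∈ Finset.Icc 1 N, ∫ t in x (i - 1)..x i, f t = ∫ t in x 0..x N, f t := by
  rw [Finset.sum_Icc_one_sub_one (fun m n => ∫ t in x m..x n, f t)]
  exact intervalIntegral.sum_integral_adjacent_intervals fun m hm => by
    simpa using hf (m + 1) (Finset.mem_Icc.2 ⟨m.succ_pos, hm⟩)

end Adjacent

theorem Real.sqrt_add_le_sqrt_one_add_mul_sqrt {S I M : ℝ} (hM : 0 ≤ M) (hS : S ≤ M * I) :
    √(S + I) ≤ √(1 + M) * √I := by
  rw [← Real.sqrt_mul (by linarith)]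
  exact Real.sqrt_le_sqrt (by linarith)

section BetaPW

variable {βm βp α : ℝ}

theorem apply_betaPW (f : ℝ → ℝ) (t : ℝ) :
    f (betaPW βm βp α t) = betaPW (f βm) (f βp) α t :=
  apply_ite f _ _ _

theorem betaPW_of_lt {t : ℝ} (ht : t < α) : betaPW βm βp α t = βm := if_pos ht

theorem betaPW_of_gt {t : ℝ} (ht : α < t) : betaPW βm βp α t = βp := if_neg ht.le.not_gt

theorem betaPW_pos (hβm : 0 < βm) (hβp : 0 < βp) (t : ℝ) : 0 < betaPW βm βp α t := by
  unfold betaPW; split_ifs <;> assumption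

theorem betaPW_le_max (t : ℝ) : betaPW βm βp α t ≤ max βm βp := by
  unfold betaPW; split_ifs
  exacts [le_max_left _ _, le_max_right _ _]

theorem betaPW_mul_sq_le (hβm : 0 < βm) (t d e : ℝ) :
    betaPW βm βp α t * d ^ 2 ≤ max βm βp * (d ^ 2 + e ^ 2) := by
  nlinarith [betaPW_le_max (βm := βm) (βp := βp) (α := α) t, sq_nonneg d, sq_nonneg e,
    le_max_of_le_left (c := βp) hβm.le]

theorem intervalIntegrable_betaPW (u w : ℝ) : IntervalIntegrable (betaPW βm βp α) volume u w := by
  rw [intervalIntegrable_iff]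
  refine Measure.integrableOn_of_bounded (M := |βm| + |βp|) measure_Ioc_lt_top.ne ?_
    (.of_forall fun t => ?_)
  · exact (Measurable.ite measurableSet_Iio measurable_const measurable_const).aestronglyMeasurable
  · unfold betaPW; split_ifs <;> simp

theorem intervalIntegrable_sq_div_betaPW (q : Polynomial ℝ) (u w : ℝ) :
    IntervalIntegrable (fun t => q.eval t ^ 2 / betaPW βm βp α t) volume u w := by
  simp_rw [div_eq_mul_inv, apply_betaPW Inv.inv]
  exact (intervalIntegrable_betaPW u w).continuousOn_mul (q.continuous.pow 2).continuousOn

variable {v : ℝ → ℝ} {q : Polynomial ℝ} {u w : ℝ}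

theorem deriv_ae_eq_div_betaPW (hβm : 0 < βm) (hβp : 0 < βp) (huw : u ≤ w)
    (hflux : ∀ t ∈ Ioo u w, t ≠ α → betaPW βm βp α t * deriv v t = q.eval t) :
    deriv v =ᵐ[volume.restrict (Ι u w)] fun t => q.eval t / betaPW βm βp α t := by
  rw [uIoc_of_le huw, ← restrict_Ioo_eq_restrict_Ioc]
  filter_upwards [ae_restrict_mem measurableSet_Ioo, ae_restrict_of_ae (volume.ae_ne α)]
    with t ht htα
  rw [eq_div_iff (betaPW_pos hβm hβp t).ne', mul_comm, hflux t ht htα]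

theorem betaPW_mul_deriv_sq_ae_eq (hβm : 0 < βm) (hβp : 0 < βp) (huw : u ≤ w)
    (hflux : ∀ t ∈ Ioo u w, t ≠ α → betaPW βm βp α t * deriv v t = q.eval t) :
    (fun t => betaPW βm βp α t * deriv v t ^ 2)
      =ᵐ[volume.restrict (Ι u w)] fun t => q.eval t ^ 2 / betaPW βm βp α t := by
  filter_upwards [deriv_ae_eq_div_betaPW hβm hβp huw hflux] with t ht
  rw [ht]
  field_simp [(betaPW_pos hβm hβp t).ne']

theorem intervalIntegrable_betaPW_mul_deriv_sq (hβm : 0 < βm) (hβp : 0 < βp) (huw : u ≤ w)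
    (hflux : ∀ t ∈ Ioo u w, t ≠ α → betaPW βm βp α t * deriv v t = q.eval t) :
    IntervalIntegrable (fun t => betaPW βm βp α t * deriv v t ^ 2) volume u w :=
  (intervalIntegrable_sq_div_betaPW q u w).congr_ae
    (betaPW_mul_deriv_sq_ae_eq hβm hβp huw hflux).symm

theorem integral_betaPW_mul_deriv_sq (hβm : 0 < βm) (hβp : 0 < βp) (huw : u ≤ w)
    (hflux : ∀ t ∈ Ioo u w, t ≠ α → betaPW βm βp α t * deriv v t = q.eval t) :
    ∫ t in u..w, betaPW βm βp α t * deriv v t ^ 2 = ∫ t in u..w, q.eval t ^ 2 / betaPW βm βp α t :=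
  intervalIntegral.integral_congr_ae_restrict (betaPW_mul_deriv_sq_ae_eq hβm hβp huw hflux)

theorem intervalIntegrable_deriv_sq (hβm : 0 < βm) (hβp : 0 < βp) (huw : u ≤ w)
    (hflux : ∀ t ∈ Ioo u w, t ≠ α → betaPW βm βp α t * deriv v t = q.eval t) :
    IntervalIntegrable (fun t => deriv v t ^ 2) volume u w := by
  have hint : IntervalIntegrable (fun t => (q.eval t / betaPW βm βp α t) ^ 2) volume u w := by
    simp_rw [div_pow, div_eq_mul_inv, apply_betaPW (fun s => (s ^ 2)⁻¹)]
    exact (intervalIntegrable_betaPW u w).continuousOn_mul (q.continuous.pow 2).continuousOn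
  refine hint.congr_ae ?_
  filter_upwards [deriv_ae_eq_div_betaPW hβm hβp huw hflux] with t ht
  rw [ht]

theorem sum_mul_flux_sq_eq_integral {p : ℕ} {gs As : ℕ → ℝ} (hβm : 0 < βm) (hβp : 0 < βp)
    (huw : u ≤ w) (hq : q.natDegree ≤ p - 1)
    (hflux : ∀ t ∈ Ioo u w, t ≠ α → betaPW βm βp α t * deriv v t = q.eval t)
    (hgs : ∀ j ∈ Finset.Icc 1 p, u < gs j ∧ gs j < w ∧ gs j ≠ α)
    (hquad : ∀ F : Polynomial ℝ, F.natDegree ≤ 2 * p - 1 →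
      ∑ j ∈ Finset.Icc 1 p, As j * F.eval (gs j) = ∫ t in u..w, F.eval t / betaPW βm βp α t) :
    ∑ j ∈ Finset.Icc 1 p, As j * (betaPW βm βp α (gs j) * deriv v (gs j)) ^ 2
      = ∫ t in u..w, betaPW βm βp α t * deriv v t ^ 2 := by
  have hdeg : (q ^ 2).natDegree ≤ 2 * p - 1 := Polynomial.natDegree_pow_le.trans (by omega)
  calc ∑ j ∈ Finset.Icc 1 p, As j * (betaPW βm βp α (gs j) * deriv v (gs j)) ^ 2
      = ∑ j ∈ Finset.Icc 1 p, As j * (q ^ 2).eval (gs j) := by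
        refine Finset.sum_congr rfl fun j hj => ?_
        obtain ⟨hu, hw, hα⟩ := hgs j hj
        rw [hflux _ ⟨hu, hw⟩ hα, Polynomial.eval_pow]
    _ = ∫ t in u..w, q.eval t ^ 2 / betaPW βm βp α t := by
        rw [hquad _ hdeg]
        simp only [Polynomial.eval_pow]
    _ = ∫ t in u..w, betaPW βm βp α t * deriv v t ^ 2 :=
        (integral_betaPW_mul_deriv_sq hβm hβp huw hflux).symm

end BetaPW

theorem MemUT.exists_flux_poly {p N k : ℕ} {a b α βm βp : ℝ} {x : ℕ → ℝ} {v : ℝ → ℝ}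
    (hv : MemUT p N k a b α βm βp x v) (hx : StrictMonoOn x (Iic N)) (hkN : k ≤ N)
    (hαk : x (k - 1) < α) (hkα : α < x k) {i : ℕ} (hi : 1 ≤ i) (hiN : i ≤ N) :
    ∃ q : Polynomial ℝ, q.natDegree ≤ p - 1 ∧
      ∀ t ∈ Ioo (x (i - 1)) (x i), t ≠ α → betaPW βm βp α t * deriv v t = q.eval t := by
  obtain ⟨-, -, -, hpoly, qm, qp, hqm, hqp, hvm, hvp, hjump⟩ := hv
  rcases lt_trichotomy i k with hik | rfl | hik
  · obtain ⟨q, hq, hvq⟩ := hpoly i hi hiN hik.ne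
    refine ⟨_, q.natDegree_C_mul_derivative_le βm hq, fun t ht _ => ?_⟩
    have htα : t < α :=
      (ht.2.trans_le (hx.monotoneOn (by simp; omega) (by simp; omega) (by omega))).trans hαk
    rw [betaPW_of_lt htα, deriv_eq_derivative_eval_of_eqOn hvq ht, Polynomial.eval_mul,
      Polynomial.eval_C]
  · refine ⟨_, qm.natDegree_C_mul_derivative_le βm hqm, fun t ht htα => ?_⟩
    rcases htα.lt_or_gt with htα | htα
    · rw [betaPW_of_lt htα, deriv_eq_derivative_eval_of_eqOn hvm ⟨ht.1, htα⟩,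
        Polynomial.eval_mul, Polynomial.eval_C]
    · rw [Polynomial.C_mul_derivative_eq_of_jump_s6 hqm hqp hjump, betaPW_of_gt htα,
        deriv_eq_derivative_eval_of_eqOn hvp ⟨htα, ht.2⟩, Polynomial.eval_mul, Polynomial.eval_C]
  · obtain ⟨q, hq, hvq⟩ := hpoly i hi hiN hik.ne'
    refine ⟨_, q.natDegree_C_mul_derivative_le βp hq, fun t ht _ => ?_⟩
    have hαt : α < t :=
      hkα.trans_le ((hx.monotoneOn (by simp; omega) (by simp; omega) (by omega)).trans ht.1.le)
    rw [betaPW_of_gt hαt, deriv_eq_derivative_eval_of_eqOn hvq ht, Polynomial.eval_mul,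
      Polynomial.eval_C]

theorem stmt_6_general (p N k : ℕ)
    (a b α βm βp : ℝ) (hβm : 0 < βm) (hβp : 0 < βp)
    (x : ℕ → ℝ) (g A : ℕ → ℕ → ℝ)
    (hmesh : 1 ≤ N ∧
      1 ≤ k ∧
      k ≤ N ∧
      a < b ∧
      x 0 = a ∧
      x N = b ∧
      (∀ i, i < N → x i < x (i + 1)) ∧
      x (k - 1) < α ∧
      α < x k ∧
      (∀ i ∈ Finset.Icc 1 N, ∀ j ∈ Finset.Icc 1 p,
      x (i - 1) < g i j ∧ g i j < x i ∧ g i j ≠ α) ∧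
      (∀ i ∈ Finset.Icc 1 N, ∀ j, 1 ≤ j → j < p → g i j < g i (j + 1)) ∧
      (∀ i ∈ Finset.Icc 1 N, ∀ j ∈ Finset.Icc 1 p, 0 < A i j) ∧
      (∀ i ∈ Finset.Icc 1 N, ∀ F : Polynomial ℝ, F.natDegree ≤ 2 * p - 1 →
      ∑ j ∈ Finset.Icc 1 p, A i j * F.eval (g i j)
        = ∫ t in (x (i - 1))..(x i), F.eval t / betaPW βm βp α t))
    (v : ℝ → ℝ) (hv : MemUT p N k a b α βm βp x v) :
    gseminormSq N p βm βp α g A v = (∫ t in a..b, betaPW βm βp α t * (deriv v t) ^ 2) ∧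
    Real.sqrt (∫ t in a..b, ((deriv v t) ^ 2 + (v t) ^ 2)) ≤ gnorm N p a b βm βp α g A v ∧
    gnorm N p a b βm βp α g A v
      ≤ Real.sqrt (1 + max βm βp) * Real.sqrt (∫ t in a..b, ((deriv v t) ^ 2 + (v t) ^ 2)) := by
  obtain ⟨-, -, hkN, hab, rfl, rfl, hxlt, hαk, hkα, hg, -, -, hquad⟩ := hmesh
  have hx : StrictMonoOn x (Iic N) := strictMonoOn_Iic_of_lt_succ hxlt
  have hle : ∀ i ∈ Finset.Icc 1 N, x (i - 1) ≤ x i := fun i hi => by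
    have hiN := (Finset.mem_Icc.1 hi).2
    exact hx.monotoneOn (by simp; omega) (by simpa using hiN) (by omega)
  choose q hqdeg hflux using fun i (hi : i ∈ Finset.Icc 1 N) =>
    hv.exists_flux_poly hx hkN hαk hkα (Finset.mem_Icc.1 hi).1 (Finset.mem_Icc.1 hi).2
  have hS : gseminormSq N p βm βp α g A v = ∫ t in x 0..x N, betaPW βm βp α t * deriv v t ^ 2 := by
    rw [gseminormSq, ← sum_Icc_integral_eq_integral fun i hi =>
      intervalIntegrable_betaPW_mul_deriv_sq hβm hβp (hle i hi) (hflux i hi)]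
    exact Finset.sum_congr rfl fun i hi =>
      sum_mul_flux_sq_eq_integral hβm hβp (hle i hi) (hqdeg i hi) (hflux i hi) (hg i hi) (hquad i hi)
  have hE : ∫ t in x 0..x N, betaPW βm βp α t * deriv v t ^ 2
      ≤ max βm βp * ∫ t in x 0..x N, (deriv v t ^ 2 + v t ^ 2) := by
    rw [← intervalIntegral.integral_const_mul]
    refine intervalIntegral.integral_mono hab.le ?_ ?_ fun t => ?_
    · exact intervalIntegrable_of_forall_Icc fun i hi =>
        intervalIntegrable_betaPW_mul_deriv_sq hβm hβp (hle i hi) (hflux i hi)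
    · refine ((intervalIntegrable_of_forall_Icc fun i hi =>
        intervalIntegrable_deriv_sq hβm hβp (hle i hi) (hflux i hi)).add ?_).const_mul _
      exact (hv.1.pow 2).intervalIntegrable_of_Icc hab.le
    · exact betaPW_mul_sq_le hβm t _ _
  have hE₀ : 0 ≤ ∫ t in x 0..x N, betaPW βm βp α t * deriv v t ^ 2 :=
    intervalIntegral.integral_nonneg hab.le fun t _ =>
      mul_nonneg (betaPW_pos hβm hβp t).le (sq_nonneg _)
  unfold gnorm
  refine ⟨hS, Real.sqrt_le_sqrt (le_add_of_nonneg_left (hS ▸ hE₀)), ?_⟩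
  exact Real.sqrt_add_le_sqrt_one_add_mul_sqrt (le_max_of_le_left hβm.le) (hS ▸ hE)

/-- for every `v` in the immersed trial space `U_T`,
`|v|²_G = ∫_a^b β (v′)²`; consequently `‖v‖₁ ≤ ‖v‖_G ≤ (1 + max(β⁻,β⁺))^(1/2) ‖v‖₁`, i.e.
the norms `‖·‖₁` and `‖·‖_G` are equivalent on `U_T`. -/
theorem stmt_6 (p N k : ℕ) (hp : 1 ≤ p)
    (a b α βm βp : ℝ) (hβm : 0 < βm) (hβp : 0 < βp)
    (x : ℕ → ℝ) (g A : ℕ → ℕ → ℝ)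
    (hmesh : 1 ≤ N ∧
      1 ≤ k ∧
      k ≤ N ∧
      a < b ∧
      x 0 = a ∧
      x N = b ∧
      (∀ i, i < N → x i < x (i + 1)) ∧
      x (k - 1) < α ∧
      α < x k ∧
      (∀ i ∈ Finset.Icc 1 N, ∀ j ∈ Finset.Icc 1 p,
      x (i - 1) < g i j ∧ g i j < x i ∧ g i j ≠ α) ∧
      (∀ i ∈ Finset.Icc 1 N, ∀ j, 1 ≤ j → j < p → g i j < g i (j + 1)) ∧
      (∀ i ∈ Finset.Icc 1 N, ∀ j ∈ Finset.Icc 1 p, 0 < A i j) ∧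
      (∀ i ∈ Finset.Icc 1 N, ∀ F : Polynomial ℝ, F.natDegree ≤ 2 * p - 1 →
      ∑ j ∈ Finset.Icc 1 p, A i j * F.eval (g i j)
        = ∫ t in (x (i - 1))..(x i), F.eval t / betaPW βm βp α t))
    (v : ℝ → ℝ) (hv : MemUT p N k a b α βm βp x v) :
    gseminormSq N p βm βp α g A v = (∫ t in a..b, betaPW βm βp α t * (deriv v t) ^ 2) ∧
    Real.sqrt (∫ t in a..b, ((deriv v t) ^ 2 + (v t) ^ 2)) ≤ gnorm N p a b βm βp α g A v ∧
    gnorm N p a b βm βp α g A v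
      ≤ Real.sqrt (1 + max βm βp) * Real.sqrt (∫ t in a..b, ((deriv v t) ^ 2 + (v t) ^ 2)) :=
  stmt_6_general p N k a b α βm βp hβm hβp x g A hmesh v hv
end
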